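/- Let v and w be C^∞ vector fields on ℝ^N with [v,w] = 0. Then the bivector field v_C ∧ w_C on ℝ^N × ℝ^N (wedge of the two complete lifts) is a Poisson tensor. -/

import Mathlib

open scoped BigOperators

/-- Partial derivative of `f : ℝ^N → ℝ` in the `s`-th coordinate direction. -/
noncomputable def pd {N : ℕ} (f : (Fin N → ℝ) → ℝ) (s : Fin N) (x : Fin N → ℝ) : ℝ :=
  fderiv ℝ f x (Pi.single s 1)

/-- Coordinate direction on `ℝ^N × ℝ^N` indexed by `Fin N ⊕ Fin N`. -/
noncomputable def dir (N : ℕ) (a : Fin N ⊕ Fin N) : (Fin N → ℝ) × (Fin N → ℝ) :=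
  Sum.elim (fun i => (Pi.single i 1, 0)) (fun i => (0, Pi.single i 1)) a

/-- Partial derivative on `ℝ^N × ℝ^N` in the `a`-th coordinate direction. -/
noncomputable def pdT {N : ℕ} (F : (Fin N → ℝ) × (Fin N → ℝ) → ℝ)
    (a : Fin N ⊕ Fin N) (z : (Fin N → ℝ) × (Fin N → ℝ)) : ℝ :=
  fderiv ℝ F z (dir N a)

/-- `π` is a Poisson tensor on `ℝ^N`: a smooth antisymmetric bivector field
satisfying the Jacobi identity. -/
def IsPoisson {N : ℕ} (π : (Fin N → ℝ) → Matrix (Fin N) (Fin N) ℝ) : Prop :=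
  (∀ i j, ContDiff ℝ (⊤ : ℕ∞) fun x => π x i j) ∧
  (∀ x i j, π x j i = - π x i j) ∧
  (∀ x i j k, ∑ s, (π x i s * pd (fun x => π x j k) s x
      + π x j s * pd (fun x => π x k i) s x
      + π x k s * pd (fun x => π x i j) s x) = 0)

/-- `v` is a (smooth) Poisson vector field for `π` (i.e. `L_v π = 0`). -/
def IsPoissonVF {N : ℕ} (π : (Fin N → ℝ) → Matrix (Fin N) (Fin N) ℝ)
    (v : (Fin N → ℝ) → Fin N → ℝ) : Prop :=
  (∀ i, ContDiff ℝ (⊤ : ℕ∞) fun x => v x i) ∧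
  (∀ x i j, ∑ s, (pd (fun x => π x i j) s x * v x s
      - π x s j * pd (fun x => v x i) s x
      - π x i s * pd (fun x => v x j) s x) = 0)

/-- The tangent lift `π_TM` of `π` to `ℝ^N × ℝ^N`. -/
noncomputable def tlift {N : ℕ} (π : (Fin N → ℝ) → Matrix (Fin N) (Fin N) ℝ)
    (z : (Fin N → ℝ) × (Fin N → ℝ)) : Matrix (Fin N ⊕ Fin N) (Fin N ⊕ Fin N) ℝ :=
  Matrix.of fun a b =>
    match a, b with
    | Sum.inl _, Sum.inl _ => 0
    | Sum.inl i, Sum.inr j => π z.1 i j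
    | Sum.inr i, Sum.inl j => π z.1 i j
    | Sum.inr i, Sum.inr j => ∑ s, pd (fun x => π x i j) s z.1 * z.2 s

/-- The complete lift `v_C` of a vector field `v`. -/
noncomputable def liftC {N : ℕ} (v : (Fin N → ℝ) → Fin N → ℝ)
    (z : (Fin N → ℝ) × (Fin N → ℝ)) : Fin N ⊕ Fin N → ℝ :=
  Sum.elim (fun i => v z.1 i) (fun i => ∑ s, pd (fun x => v x i) s z.1 * z.2 s)

/-- The vertical lift `v_V` of a vector field `v`. -/
def liftV {N : ℕ} (v : (Fin N → ℝ) → Fin N → ℝ)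
    (z : (Fin N → ℝ) × (Fin N → ℝ)) : Fin N ⊕ Fin N → ℝ :=
  Sum.elim (fun _ => 0) (fun i => v z.1 i)

/-- The wedge `u ∧ w` of two vector fields, as a bivector field. -/
def wedge {Z ι : Type*} (u w : Z → ι → ℝ) (z : Z) : Matrix ι ι ℝ :=
  Matrix.of fun a b => u z a * w z b - u z b * w z a

/-- A Poisson tensor on `ℝ^N × ℝ^N`: a smooth antisymmetric bivector field
satisfying the Jacobi identity. -/
def IsPoissonT {N : ℕ}
    (P : (Fin N → ℝ) × (Fin N → ℝ) → Matrix (Fin N ⊕ Fin N) (Fin N ⊕ Fin N) ℝ) : Prop :=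
  (∀ a b, ContDiff ℝ (⊤ : ℕ∞) fun z => P z a b) ∧
  (∀ z a b, P z b a = - P z a b) ∧
  (∀ z a b c, ∑ s, (P z a s * pdT (fun z => P z b c) s z
      + P z b s * pdT (fun z => P z c a) s z
      + P z c s * pdT (fun z => P z a b) s z) = 0)

/-- `c` is a Casimir function for `π` on `ℝ^N`. -/
def IsCasimir {N : ℕ} (π : (Fin N → ℝ) → Matrix (Fin N) (Fin N) ℝ)
    (c : (Fin N → ℝ) → ℝ) : Prop :=
  ContDiff ℝ (⊤ : ℕ∞) c ∧ ∀ x j, ∑ i, pd c i x * π x i j = 0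

/-- `F` is a Casimir function for the bivector field `P` on `ℝ^N × ℝ^N`. -/
def IsCasimirT {N : ℕ}
    (P : (Fin N → ℝ) × (Fin N → ℝ) → Matrix (Fin N ⊕ Fin N) (Fin N ⊕ Fin N) ℝ)
    (F : (Fin N → ℝ) × (Fin N → ℝ) → ℝ) : Prop :=
  ∀ z b, ∑ a, pdT F a z * P z a b = 0

/-- `f ∘ q : ℝ^N × ℝ^N → ℝ`. -/
def fq {N : ℕ} (f : (Fin N → ℝ) → ℝ) (z : (Fin N → ℝ) × (Fin N → ℝ)) : ℝ := f z.1

/-- The fiber-wise linear function `l_{df}` on `ℝ^N × ℝ^N`. -/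
noncomputable def ldf {N : ℕ} (f : (Fin N → ℝ) → ℝ) (z : (Fin N → ℝ) × (Fin N → ℝ)) : ℝ :=
  ∑ s, pd f s z.1 * z.2 s

/-- The commutator `[v,w]` of two vector fields on `ℝ^N`. -/
noncomputable def vbr {N : ℕ} (v w : (Fin N → ℝ) → Fin N → ℝ)
    (x : Fin N → ℝ) (i : Fin N) : ℝ :=
  ∑ s, (v x s * pd (fun x => w x i) s x - w x s * pd (fun x => v x i) s x)


section Aux
variable {N : ℕ}

lemma contDiff_pd {f : (Fin N → ℝ) → ℝ} (hf : ContDiff ℝ (⊤ : ℕ∞) f) (s : Fin N) :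
    ContDiff ℝ (⊤ : ℕ∞) (pd f s) := by
  have := (ContinuousLinearMap.apply ℝ ℝ (Pi.single s 1 : Fin N → ℝ)).contDiff.comp
    (hf.fderiv_right (show ((⊤ : ℕ∞) : WithTop ℕ∞) + 1 ≤ ((⊤ : ℕ∞) : WithTop ℕ∞) by exact_mod_cast (le_top : (⊤:ℕ∞)+1 ≤ ⊤)))
  exact this

lemma pd_clm_apply {f : (Fin N → ℝ) → ℝ} (hf : ContDiff ℝ (⊤ : ℕ∞) f) (s t : Fin N) (x : Fin N → ℝ) :
    pd (pd f s) t x = fderiv ℝ (fderiv ℝ f) x (Pi.single t 1) (Pi.single s 1) := by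
  have hd : DifferentiableAt ℝ (fderiv ℝ f) x :=
    ((hf.fderiv_right (show ((⊤ : ℕ∞) : WithTop ℕ∞) + 1 ≤ ((⊤ : ℕ∞) : WithTop ℕ∞) by exact_mod_cast (le_top : (⊤:ℕ∞)+1 ≤ ⊤))).differentiable (by simp)) x
  have e : pd f s = fun y => (fderiv ℝ f y) ((fun _ => (Pi.single s 1 : Fin N → ℝ)) y) := rfl
  rw [pd, e, fderiv_clm_apply hd (differentiableAt_const _)]
  simp

lemma pd_symm {f : (Fin N → ℝ) → ℝ} (hf : ContDiff ℝ (⊤ : ℕ∞) f) (s t : Fin N) (x : Fin N → ℝ) :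
    pd (pd f s) t x = pd (pd f t) s x := by
  rw [pd_clm_apply hf, pd_clm_apply hf]
  exact (hf.contDiffAt.isSymmSndFDerivAt (by rw [minSmoothness_of_isRCLikeNormedField]; exact WithTop.coe_le_coe.mpr (le_top : (2:ℕ∞) ≤ ⊤))).eq _ _

lemma pd_mul {f g : (Fin N → ℝ) → ℝ} {x : Fin N → ℝ}
    (hf : DifferentiableAt ℝ f x) (hg : DifferentiableAt ℝ g x) (s : Fin N) :
    pd (fun x => f x * g x) s x = pd f s x * g x + f x * pd g s x := by
  rw [pd, fderiv_fun_mul hf hg]; simp [pd, smul_eq_mul]; ring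

lemma pd_sub {f g : (Fin N → ℝ) → ℝ} {x : Fin N → ℝ}
    (hf : DifferentiableAt ℝ f x) (hg : DifferentiableAt ℝ g x) (s : Fin N) :
    pd (fun x => f x - g x) s x = pd f s x - pd g s x := by
  rw [pd, fderiv_fun_sub hf hg]; simp [pd]

lemma pd_sum {ι : Type*} (u : Finset ι) {F : ι → (Fin N → ℝ) → ℝ} {x : Fin N → ℝ}
    (hF : ∀ i ∈ u, DifferentiableAt ℝ (F i) x) (s : Fin N) :
    pd (fun x => ∑ i ∈ u, F i x) s x = ∑ i ∈ u, pd (F i) s x := by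
  rw [pd, fderiv_fun_sum hF]; simp [pd]

lemma pdT_fst {f : (Fin N → ℝ) → ℝ} {z : (Fin N → ℝ) × (Fin N → ℝ)}
    (hf : DifferentiableAt ℝ f z.1) (a : Fin N ⊕ Fin N) :
    pdT (fun z => f z.1) a z = Sum.elim (fun s => pd f s z.1) (fun _ => 0) a := by
  have h : HasFDerivAt (fun z : (Fin N → ℝ) × (Fin N → ℝ) => f z.1)
      ((fderiv ℝ f z.1).comp (ContinuousLinearMap.fst ℝ (Fin N → ℝ) (Fin N → ℝ))) z :=
    hf.hasFDerivAt.comp z hasFDerivAt_fst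
  rw [pdT, h.fderiv]
  cases a <;> simp [dir, pd]

lemma pdT_snd_coord (t : Fin N) (a : Fin N ⊕ Fin N) (z : (Fin N → ℝ) × (Fin N → ℝ)) :
    pdT (fun z => z.2 t) a z
      = Sum.elim (fun _ => (0:ℝ)) (fun s => (Pi.single s 1 : Fin N → ℝ) t) a := by
  have h : HasFDerivAt (fun z : (Fin N → ℝ) × (Fin N → ℝ) => z.2 t)
      ((ContinuousLinearMap.proj t).comp (ContinuousLinearMap.snd ℝ (Fin N → ℝ) (Fin N → ℝ))) z :=
    ((ContinuousLinearMap.proj t).comp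
      (ContinuousLinearMap.snd ℝ (Fin N → ℝ) (Fin N → ℝ))).hasFDerivAt
  rw [pdT, h.fderiv]
  cases a <;> simp [dir]

lemma pdT_mul {f g : (Fin N → ℝ) × (Fin N → ℝ) → ℝ} {z : (Fin N → ℝ) × (Fin N → ℝ)}
    (hf : DifferentiableAt ℝ f z) (hg : DifferentiableAt ℝ g z) (a : Fin N ⊕ Fin N) :
    pdT (fun z => f z * g z) a z = pdT f a z * g z + f z * pdT g a z := by
  rw [pdT, fderiv_fun_mul hf hg]
  simp [pdT, smul_eq_mul]; ring

lemma pdT_sum {ι : Type*} (u : Finset ι) {F : ι → (Fin N → ℝ) × (Fin N → ℝ) → ℝ}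
    {z : (Fin N → ℝ) × (Fin N → ℝ)}
    (hF : ∀ i ∈ u, DifferentiableAt ℝ (F i) z) (a : Fin N ⊕ Fin N) :
    pdT (fun z => ∑ i ∈ u, F i z) a z = ∑ i ∈ u, pdT (F i) a z := by
  rw [pdT, fderiv_fun_sum hF]; simp [pdT]

lemma pdT_sub {f g : (Fin N → ℝ) × (Fin N → ℝ) → ℝ} {z : (Fin N → ℝ) × (Fin N → ℝ)}
    (hf : DifferentiableAt ℝ f z) (hg : DifferentiableAt ℝ g z) (a : Fin N ⊕ Fin N) :
    pdT (fun z => f z - g z) a z = pdT f a z - pdT g a z := by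
  rw [pdT, fderiv_fun_sub hf hg]; simp [pdT]

lemma diff_snd_coord (t : Fin N) :
    Differentiable ℝ (fun z : (Fin N → ℝ) × (Fin N → ℝ) => z.2 t) :=
  ((ContinuousLinearMap.proj t).comp
    (ContinuousLinearMap.snd ℝ (Fin N → ℝ) (Fin N → ℝ))).differentiable

lemma contDiff_liftC {v : (Fin N → ℝ) → Fin N → ℝ} (hv : ∀ i, ContDiff ℝ (⊤ : ℕ∞) fun x => v x i)
    (a : Fin N ⊕ Fin N) : ContDiff ℝ (⊤ : ℕ∞) (fun z => liftC v z a) := by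
  cases a with
  | inl i => exact (hv i).comp contDiff_fst
  | inr i =>
    show ContDiff ℝ (⊤ : ℕ∞) fun z : (Fin N → ℝ) × (Fin N → ℝ) =>
      ∑ s, pd (fun x => v x i) s z.1 * z.2 s
    refine ContDiff.sum fun s _ => ?_
    exact ((contDiff_pd (hv i) s).comp contDiff_fst).mul
      ((contDiff_apply ℝ ℝ s).comp contDiff_snd)

lemma pdT_liftC_inl {v : (Fin N → ℝ) → Fin N → ℝ} (hv : ∀ i, ContDiff ℝ (⊤ : ℕ∞) fun x => v x i)
    (i : Fin N) (a : Fin N ⊕ Fin N) (z : (Fin N → ℝ) × (Fin N → ℝ)) :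
    pdT (fun z => liftC v z (Sum.inl i)) a z
      = Sum.elim (fun s => pd (fun x => v x i) s z.1) (fun _ => 0) a :=
  pdT_fst ((hv i).differentiable (by simp) z.1) a

lemma pdT_liftC_inr {v : (Fin N → ℝ) → Fin N → ℝ} (hv : ∀ i, ContDiff ℝ (⊤ : ℕ∞) fun x => v x i)
    (i : Fin N) (a : Fin N ⊕ Fin N) (z : (Fin N → ℝ) × (Fin N → ℝ)) :
    pdT (fun z => liftC v z (Sum.inr i)) a z
      = Sum.elim (fun s => ∑ t, pd (pd (fun x => v x i) t) s z.1 * z.2 t)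
          (fun s => pd (fun x => v x i) s z.1) a := by
  have e : (fun z : (Fin N → ℝ) × (Fin N → ℝ) => liftC v z (Sum.inr i))
      = fun z => ∑ t, (fun z : (Fin N → ℝ) × (Fin N → ℝ) =>
          pd (fun x => v x i) t z.1 * z.2 t) z := rfl
  have hd : ∀ t : Fin N, t ∈ Finset.univ → DifferentiableAt ℝ
      (fun z : (Fin N → ℝ) × (Fin N → ℝ) => pd (fun x => v x i) t z.1 * z.2 t) z :=
    fun t _ => ((((contDiff_pd (hv i) t).comp contDiff_fst).differentiable (by simp)) z).mul
      (diff_snd_coord t z)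
  rw [e, pdT_sum Finset.univ hd a]
  have step : ∀ t : Fin N, pdT (fun z : (Fin N → ℝ) × (Fin N → ℝ) =>
      pd (fun x => v x i) t z.1 * z.2 t) a z
      = Sum.elim (fun s => pd (pd (fun x => v x i) t) s z.1) (fun _ => 0) a * z.2 t
        + pd (fun x => v x i) t z.1
          * Sum.elim (fun _ => (0:ℝ)) (fun s => (Pi.single s 1 : Fin N → ℝ) t) a := by
    intro t
    have h1 : DifferentiableAt ℝ (fun z : (Fin N → ℝ) × (Fin N → ℝ) =>
        pd (fun x => v x i) t z.1) z :=
      (((contDiff_pd (hv i) t).comp contDiff_fst).differentiable (by simp)) z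
    rw [pdT_mul h1 (diff_snd_coord t z) a,
      pdT_fst (((contDiff_pd (hv i) t).differentiable (by simp)) z.1) a, pdT_snd_coord t a z]
  rw [Finset.sum_congr rfl fun t _ => step t]
  cases a with
  | inl s => simp
  | inr s => simp [Pi.single_apply]

lemma rearr (y e f : Fin N → ℝ) (A B : Fin N → Fin N → ℝ) :
    (∑ s, e s * (∑ t, A t s * y t)) + ∑ s, (∑ t, B s t * y t) * f s
      = ∑ t, (∑ s, (e s * A t s + B s t * f s)) * y t := by
  have h1 : ∑ s, e s * (∑ t, A t s * y t) = ∑ t, ∑ s, e s * (A t s * y t) := by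
    rw [Finset.sum_comm]; exact Finset.sum_congr rfl fun s _ => Finset.mul_sum _ _ _
  have h2 : ∑ s, (∑ t, B s t * y t) * f s = ∑ t, ∑ s, (B s t * y t) * f s := by
    rw [Finset.sum_comm]; exact Finset.sum_congr rfl fun s _ => Finset.sum_mul _ _ _
  rw [h1, h2, ← Finset.sum_add_distrib]
  refine Finset.sum_congr rfl fun t _ => ?_
  rw [Finset.sum_mul, ← Finset.sum_add_distrib]
  exact Finset.sum_congr rfl fun s _ => by ring

lemma comm_lift {v w : (Fin N → ℝ) → Fin N → ℝ}
    (hv : ∀ i, ContDiff ℝ (⊤ : ℕ∞) fun x => v x i) (hw : ∀ i, ContDiff ℝ (⊤ : ℕ∞) fun x => w x i)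
    (hbr : ∀ x i, vbr v w x i = 0) (z : (Fin N → ℝ) × (Fin N → ℝ)) (i : Fin N ⊕ Fin N) :
    ∑ a, liftC v z a * pdT (fun z => liftC w z i) a z
      = ∑ a, liftC w z a * pdT (fun z => liftC v z i) a z := by
  have hbr' : ∀ x j, ∑ s, v x s * pd (fun x => w x j) s x
      = ∑ s, w x s * pd (fun x => v x j) s x := by
    intro x j
    have h := hbr x j
    rw [vbr, Finset.sum_sub_distrib, sub_eq_zero] at h
    exact h
  cases i with
  | inl i =>
    rw [Fintype.sum_sum_type, Fintype.sum_sum_type]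
    simp only [pdT_liftC_inl hv, pdT_liftC_inl hw, Sum.elim_inl, Sum.elim_inr]
    simp only [liftC, Sum.elim_inl, Sum.elim_inr, mul_zero, Finset.sum_const_zero, add_zero]
    exact hbr' z.1 i
  | inr i =>
    rw [Fintype.sum_sum_type, Fintype.sum_sum_type]
    simp only [pdT_liftC_inr hv, pdT_liftC_inr hw, Sum.elim_inl, Sum.elim_inr]
    simp only [liftC, Sum.elim_inl, Sum.elim_inr]
    rw [rearr z.2 (v z.1) (fun s => pd (fun x => w x i) s z.1)
        (fun t s => pd (pd (fun x => w x i) t) s z.1)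
        (fun s t => pd (fun x => v x s) t z.1),
      rearr z.2 (w z.1) (fun s => pd (fun x => v x i) s z.1)
        (fun t s => pd (pd (fun x => v x i) t) s z.1)
        (fun s t => pd (fun x => w x s) t z.1)]
    refine Finset.sum_congr rfl fun t _ => ?_
    congr 1
    have hzero : pd (fun x => vbr v w x i) t z.1 = 0 := by
      have e : (fun x => vbr v w x i) = fun _ => (0:ℝ) := funext fun x => hbr x i
      rw [e, pd, fderiv_const_apply]
      simp
    have e1 : pd (fun x => vbr v w x i) t z.1
        = ∑ s, pd (fun x => v x s * pd (fun x => w x i) s x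
            - w x s * pd (fun x => v x i) s x) t z.1 := by
      simp only [vbr]
      refine pd_sum _ (fun s _ => ?_) t
      exact ((((hv s).differentiable (by simp)) z.1).mul
          (((contDiff_pd (hw i) s).differentiable (by simp)) z.1)).sub
        ((((hw s).differentiable (by simp)) z.1).mul
          (((contDiff_pd (hv i) s).differentiable (by simp)) z.1))
    have e2 : ∀ s : Fin N, pd (fun x => v x s * pd (fun x => w x i) s x
          - w x s * pd (fun x => v x i) s x) t z.1
        = (pd (fun x => v x s) t z.1 * pd (fun x => w x i) s z.1
            + v z.1 s * pd (pd (fun x => w x i) s) t z.1)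
          - (pd (fun x => w x s) t z.1 * pd (fun x => v x i) s z.1
            + w z.1 s * pd (pd (fun x => v x i) s) t z.1) := by
      intro s
      rw [pd_sub ((((hv s).differentiable (by simp)) z.1).fun_mul
          (((contDiff_pd (hw i) s).differentiable (by simp)) z.1))
          ((((hw s).differentiable (by simp)) z.1).fun_mul
          (((contDiff_pd (hv i) s).differentiable (by simp)) z.1)) t,
        pd_mul (((hv s).differentiable (by simp)) z.1)
          (((contDiff_pd (hw i) s).differentiable (by simp)) z.1) t,
        pd_mul (((hw s).differentiable (by simp)) z.1)
          (((contDiff_pd (hv i) s).differentiable (by simp)) z.1) t]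
    have key : ∑ s, ((v z.1 s * pd (pd (fun x => w x i) t) s z.1
          + pd (fun x => v x s) t z.1 * pd (fun x => w x i) s z.1)
        - (w z.1 s * pd (pd (fun x => v x i) t) s z.1
          + pd (fun x => w x s) t z.1 * pd (fun x => v x i) s z.1)) = 0 := by
      rw [← hzero, e1]
      refine Finset.sum_congr rfl fun s _ => ?_
      rw [e2 s, pd_symm (hw i) s t z.1, pd_symm (hv i) s t z.1]
      ring
    rw [Finset.sum_sub_distrib, sub_eq_zero] at key
    exact key

lemma key_wedge {ι : Type*} [Fintype ι] (u w : ι → ℝ) (du dw : ι → ι → ℝ)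
    (h : ∀ i, ∑ s, u s * dw i s = ∑ s, w s * du i s) (a b c : ι) :
    ∑ s, ((u a * w s - u s * w a) * ((du b s * w c + u b * dw c s) - (du c s * w b + u c * dw b s))
        + (u b * w s - u s * w b) * ((du c s * w a + u c * dw a s) - (du a s * w c + u a * dw c s))
        + (u c * w s - u s * w c) * ((du a s * w b + u a * dw b s)
            - (du b s * w a + u b * dw a s))) = 0 := by
  have expand : ∀ s : ι,
      ((u a * w s - u s * w a) * ((du b s * w c + u b * dw c s) - (du c s * w b + u c * dw b s))
        + (u b * w s - u s * w b) * ((du c s * w a + u c * dw a s) - (du a s * w c + u a * dw c s))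
        + (u c * w s - u s * w c) * ((du a s * w b + u a * dw b s)
            - (du b s * w a + u b * dw a s)))
      =
      ((u a * w c) * (w s * du b s) - (u a * w b) * (w s * du c s)
        + (u a * u b) * (w s * dw c s) - (u a * u c) * (w s * dw b s)
        - (w a * w c) * (u s * du b s) + (w a * w b) * (u s * du c s)
        - (w a * u b) * (u s * dw c s) + (w a * u c) * (u s * dw b s))
      + ((u b * w a) * (w s * du c s) - (u b * w c) * (w s * du a s)
        + (u b * u c) * (w s * dw a s) - (u b * u a) * (w s * dw c s)
        - (w b * w a) * (u s * du c s) + (w b * w c) * (u s * du a s)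
        - (w b * u c) * (u s * dw a s) + (w b * u a) * (u s * dw c s))
      + ((u c * w b) * (w s * du a s) - (u c * w a) * (w s * du b s)
        + (u c * u a) * (w s * dw b s) - (u c * u b) * (w s * dw a s)
        - (w c * w b) * (u s * du a s) + (w c * w a) * (u s * du b s)
        - (w c * u a) * (u s * dw b s) + (w c * u b) * (u s * dw a s)) := by
    intro s; ring
  rw [Finset.sum_congr rfl fun s _ => expand s]
  simp only [Finset.sum_add_distrib, Finset.sum_sub_distrib, ← Finset.mul_sum]
  rw [h a, h b, h c]
  ring

end Aux

/-- if `[v,w] = 0` then `v_C ∧ w_C` is a Poisson tensor. -/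
theorem wedge_liftC_liftC_commuting_is_poisson {N : ℕ}
    (v w : (Fin N → ℝ) → Fin N → ℝ)
    (hv : ∀ i, ContDiff ℝ (⊤ : ℕ∞) fun x => v x i) (hw : ∀ i, ContDiff ℝ (⊤ : ℕ∞) fun x => w x i)
    (hbr : ∀ x i, vbr v w x i = 0) :
    IsPoissonT (wedge (liftC v) (liftC w)) := by
  refine ⟨?_, ?_, ?_⟩
  · intro a b
    have e : (fun z => wedge (liftC v) (liftC w) z a b)
        = fun z => liftC v z a * liftC w z b - liftC v z b * liftC w z a := rfl
    rw [e]
    exact ((contDiff_liftC hv a).mul (contDiff_liftC hw b)).sub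
      ((contDiff_liftC hv b).mul (contDiff_liftC hw a))
  · intro z a b
    simp only [wedge, Matrix.of_apply]
    ring
  · intro z a b c
    have hU : ∀ b, DifferentiableAt ℝ (fun z => liftC v z b) z :=
      fun b => (contDiff_liftC hv b).differentiable (by simp) z
    have hW : ∀ b, DifferentiableAt ℝ (fun z => liftC w z b) z :=
      fun b => (contDiff_liftC hw b).differentiable (by simp) z
    have hPd : ∀ (b c s : Fin N ⊕ Fin N),
        pdT (fun z => wedge (liftC v) (liftC w) z b c) s z
        = (pdT (fun z => liftC v z b) s z * liftC w z c
            + liftC v z b * pdT (fun z => liftC w z c) s z)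
          - (pdT (fun z => liftC v z c) s z * liftC w z b
            + liftC v z c * pdT (fun z => liftC w z b) s z) := by
      intro b c s
      have e : (fun z => wedge (liftC v) (liftC w) z b c)
          = fun z => (fun z => (fun z => liftC v z b) z * (fun z => liftC w z c) z) z
            - (fun z => (fun z => liftC v z c) z * (fun z => liftC w z b) z) z := rfl
      rw [e, pdT_sub ((hU b).fun_mul (hW c)) ((hU c).fun_mul (hW b)) s,
        pdT_mul (hU b) (hW c) s, pdT_mul (hU c) (hW b) s]
    have hgoal := key_wedge (fun a => liftC v z a) (fun a => liftC w z a)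
      (fun i s => pdT (fun z => liftC v z i) s z) (fun i s => pdT (fun z => liftC w z i) s z)
      (fun i => comm_lift hv hw hbr z i) a b c
    refine Eq.trans (Finset.sum_congr rfl fun s _ => ?_) hgoal
    rw [hPd b c s, hPd c a s, hPd a b s]
    simp only [wedge, Matrix.of_apply]
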